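/- arXiv:1302.2829 — 2 statements merged into one kernel-verified Lean document; each statement's English description precedes it below -/
import Mathlib

section
/- (Lemma A.1, fourth inequality) Let 0 < t < s be real numbers, let θ ∈ ℂ with |θ| ≤ 1/30, let x ∈ ℝ³ and j ∈ {1,2,3}. Then ∑_{λ∈{0,1}} ∫_{{k∈ℝ³ : t ≤ |k| ≤ s}} |k|² · |G(θ)_j(x,(k,λ))|² d³k ≤ α³ · min( C₁² · e/2 , C₂² · s³·(s−t) ). -/
/-!
For `‖θ‖ ≤ 1/30` one has `-2 Re θ ≤ 1/15` and `Re e^{-2θ} ≥ 1 - 4‖θ‖ ≥ 3/4`, and orthonormality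
gives `|ε_j| ≤ 1`; hence `|k|² |G(θ)_j|² ≤ α³ e^{1/15} / (2 (2π)³) · |k| e^{-3|k|²/2}` almost
everywhere. Since `|k| e^{-|k|²/2} ≤ 1`, this envelope is dominated by a Gaussian with integral
`π^{3/2}` over `ℝ³`; on the shell it is at most `s` times the constant, and the shell has volume
`4π (s³ - t³) / 3 ≤ 4π s² (s - t)`. Doubling for the two polarizations gives the two entries of
the minimum.
-/

open MeasureTheory

noncomputable section

/-- `ℝ³` as a Euclidean space. -/
abbrev R3 : Type := EuclideanSpace ℝ (Fin 3)

/-- The coupling function `G(θ)(x,(k,λ))`, `j`-th component. -/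
def Gfun (α : ℝ) (ε : R3 → Fin 2 → Fin 3 → ℂ) (θ : ℂ)
    (x k : R3) (lam : Fin 2) (j : Fin 3) : ℂ :=
  ((α ^ ((3:ℝ)/2) / (2 * Real.pi) ^ ((3:ℝ)/2) : ℝ) : ℂ) * Complex.exp (-θ) *
    Complex.exp (-(Complex.exp (-(2*θ))) * ((‖k‖ ^ 2 : ℝ) : ℂ)) *
    (((2 * ‖k‖) ^ (-(1:ℝ)/2) : ℝ) : ℂ) *
    Complex.exp (-Complex.I * (α : ℂ) * ((inner ℝ k x : ℝ) : ℂ)) *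
    ε k lam j

/-- The polarization vectors form an a.e. orthonormal transversal family. -/
def Polarization (ε : R3 → Fin 2 → Fin 3 → ℂ) : Prop :=
  Measurable ε ∧
  ∀ᵐ k ∂(volume : Measure R3), k ≠ 0 →
    ∀ lam mu : Fin 2,
      (∑ j : Fin 3, (starRingEnd ℂ) (ε k lam j) * ε k mu j) = (if lam = mu then 1 else 0) ∧
      (∑ j : Fin 3, ((k j : ℝ) : ℂ) * ε k lam j) = 0

def C1 : ℝ := Real.exp (3/4) / (2 * Real.pi)

def C2 : ℝ := Real.sqrt 2 * Real.exp (1/4) / (2 * Real.pi)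

def C1om : ℝ := Real.exp (1/2) * Real.pi ^ ((1:ℝ)/4) / (2 ^ ((1:ℝ)/4) * (2 * Real.pi))

open Real Module Metric

theorem Complex.one_sub_two_mul_norm_le_re_exp {z : ℂ} (hz : ‖z‖ ≤ 1) :
    1 - 2 * ‖z‖ ≤ (Complex.exp z).re := by
  have h := (Complex.re_le_norm (1 - Complex.exp z)).trans_eq (norm_sub_rev _ _)
  rw [Complex.sub_re, Complex.one_re] at h
  linarith [Complex.norm_exp_sub_one_le hz]

theorem Real.mul_exp_neg_sq_div_two_le_one (r : ℝ) : r * Real.exp (-(r ^ 2 / 2)) ≤ 1 := by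
  rw [Real.exp_neg, mul_inv_le_iff₀ (Real.exp_pos _), one_mul]
  nlinarith [Real.add_one_le_exp (r ^ 2 / 2), sq_nonneg (r - 1)]

theorem Real.mul_exp_neg_three_halves_mul_sq_le (r : ℝ) :
    r * Real.exp (-(3 / 2) * r ^ 2) ≤ Real.exp (-r ^ 2) := by
  have hsplit : Real.exp (-(3 / 2) * r ^ 2) = Real.exp (-(r ^ 2 / 2)) * Real.exp (-r ^ 2) := by
    rw [← Real.exp_add]; ring_nf
  rw [hsplit, ← mul_assoc]
  exact mul_le_of_le_one_left (Real.exp_pos _).le (Real.mul_exp_neg_sq_div_two_le_one r)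

theorem Polarization.ae_norm_le_one {ε : R3 → Fin 2 → Fin 3 → ℂ} (hε : Polarization ε)
    (lam : Fin 2) (j : Fin 3) : ∀ᵐ k ∂(volume : Measure R3), ‖ε k lam j‖ ≤ 1 := by
  filter_upwards [hε.2, Measure.ae_ne volume 0] with k hk hk0
  have hunit : ∑ i : Fin 3, ‖ε k lam i‖ ^ 2 = 1 := by
    have h := (hk hk0 lam lam).1
    simp only [mul_comm ((starRingEnd ℂ) _), Complex.mul_conj, Complex.normSq_eq_norm_sq,
      if_true] at h
    exact_mod_cast h
  have hj : ‖ε k lam j‖ ^ 2 ≤ 1 :=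
    hunit ▸ Finset.single_le_sum (fun i _ => sq_nonneg ‖ε k lam i‖) (Finset.mem_univ j)
  exact (sq_le_one_iff₀ (norm_nonneg _)).1 hj

theorem norm_Gfun_sq {α : ℝ} (hα : 0 ≤ α) (ε : R3 → Fin 2 → Fin 3 → ℂ) (θ : ℂ)
    (x k : R3) (lam : Fin 2) (j : Fin 3) :
    ‖Gfun α ε θ x k lam j‖ ^ 2 =
      α ^ 3 / (2 * π) ^ 3 * Real.exp (-(2 * θ.re)) *
        Real.exp (-(2 * (Complex.exp (-(2 * θ))).re) * ‖k‖ ^ 2) * (2 * ‖k‖)⁻¹ *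
        ‖ε k lam j‖ ^ 2 := by
  have hsq : ∀ {a : ℝ} (p : ℝ), 0 ≤ a → (a ^ p) ^ 2 = a ^ (p * 2) := fun p ha =>
    (Real.rpow_mul_natCast ha p 2).symm
  have hexp : ∀ y : ℝ, Real.exp y ^ 2 = Real.exp (2 * y) := fun y => by
    rw [← Real.exp_nat_mul]; norm_num
  simp only [Gfun, norm_mul, Complex.norm_exp, Complex.norm_real, Real.norm_eq_abs, mul_pow,
    sq_abs, div_pow, hexp, Complex.neg_re, Complex.mul_re, Complex.I_re, Complex.ofReal_re,
    Complex.ofReal_im, mul_zero, sub_zero, neg_zero, zero_mul, Real.exp_zero, mul_one,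
    hsq _ hα, hsq _ (by positivity : (0:ℝ) ≤ 2 * π), hsq _ (by positivity : (0:ℝ) ≤ 2 * ‖k‖)]
  rw [show (3 / 2 : ℝ) * 2 = (3 : ℕ) by norm_num, show (-1 / 2 : ℝ) * 2 = -1 by norm_num,
    Real.rpow_natCast, Real.rpow_natCast, Real.rpow_neg_one]
  ring_nf

theorem norm_sq_mul_norm_Gfun_sq_le {α : ℝ} (hα : 0 ≤ α) {ε : R3 → Fin 2 → Fin 3 → ℂ} {θ : ℂ}
    (hθ : ‖θ‖ ≤ 1 / 30) (x k : R3) {lam : Fin 2} {j : Fin 3} (hε : ‖ε k lam j‖ ≤ 1) :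
    ‖k‖ ^ 2 * ‖Gfun α ε θ x k lam j‖ ^ 2 ≤
      α ^ 3 * (Real.exp (1 / 15) / (2 * (2 * π) ^ 3)) * (‖k‖ * Real.exp (-(3 / 2) * ‖k‖ ^ 2)) := by
  have hdamp : Real.exp (-(2 * θ.re)) ≤ Real.exp (1 / 15) := by
    gcongr
    linarith [neg_le_of_abs_le (Complex.abs_re_le_norm θ)]
  have hre : 3 / 4 ≤ (Complex.exp (-(2 * θ))).re := by
    have hz : ‖-(2 * θ)‖ = 2 * ‖θ‖ := by simp
    linarith [Complex.one_sub_two_mul_norm_le_re_exp (z := -(2 * θ)) (by linarith)]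
  have hgauss : Real.exp (-(2 * (Complex.exp (-(2 * θ))).re) * ‖k‖ ^ 2) ≤
      Real.exp (-(3 / 2) * ‖k‖ ^ 2) := by
    gcongr
    linarith
  have hk : ‖k‖ ^ 2 * (2 * ‖k‖)⁻¹ = ‖k‖ / 2 := by
    rcases eq_or_ne ‖k‖ 0 with h | h
    · simp [h]
    · field_simp
  have hε2 : ‖ε k lam j‖ ^ 2 ≤ 1 := pow_le_one₀ (norm_nonneg _) hε
  calc ‖k‖ ^ 2 * ‖Gfun α ε θ x k lam j‖ ^ 2
      = α ^ 3 / (2 * π) ^ 3 * Real.exp (-(2 * θ.re)) *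
          Real.exp (-(2 * (Complex.exp (-(2 * θ))).re) * ‖k‖ ^ 2) * (‖k‖ ^ 2 * (2 * ‖k‖)⁻¹) *
          ‖ε k lam j‖ ^ 2 := by
        rw [norm_Gfun_sq hα]; ring
    _ ≤ α ^ 3 / (2 * π) ^ 3 * Real.exp (1 / 15) * Real.exp (-(3 / 2) * ‖k‖ ^ 2) * (‖k‖ / 2) *
          1 := by
        rw [hk]; gcongr
    _ = _ := by ring

section Envelope

variable {V : Type*} [NormedAddCommGroup V] [InnerProductSpace ℝ V] [FiniteDimensional ℝ V]
  [MeasurableSpace V] [BorelSpace V]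

theorem integral_exp_neg_sq_norm : ∫ v : V, Real.exp (-‖v‖ ^ 2) = π ^ (finrank ℝ V / 2 : ℝ) := by
  simpa using GaussianFourier.integral_rexp_neg_mul_sq_norm (V := V) one_pos

theorem integrable_exp_neg_sq_norm : Integrable fun v : V => Real.exp (-‖v‖ ^ 2) :=
  .of_integral_ne_zero (by rw [integral_exp_neg_sq_norm]; positivity)

theorem setIntegral_le_of_le_norm_mul_exp {f : V → ℝ} {c : ℝ} (hc : 0 ≤ c) (hf0 : ∀ v, 0 ≤ f v)
    (hf : ∀ᵐ v, f v ≤ c * (‖v‖ * Real.exp (-(3 / 2) * ‖v‖ ^ 2))) (S : Set V) :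
    ∫ v in S, f v ≤ c * π ^ (finrank ℝ V / 2 : ℝ) := by
  have hg : Integrable fun v : V => c * Real.exp (-‖v‖ ^ 2) :=
    integrable_exp_neg_sq_norm.const_mul c
  calc ∫ v in S, f v ≤ ∫ v in S, c * Real.exp (-‖v‖ ^ 2) :=
        integral_mono_of_nonneg (.of_forall hf0) hg.integrableOn <| ae_restrict_of_ae <|
          hf.mono fun v hv => hv.trans <|
            mul_le_mul_of_nonneg_left (Real.mul_exp_neg_three_halves_mul_sq_le ‖v‖) hc
    _ ≤ ∫ v, c * Real.exp (-‖v‖ ^ 2) :=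
        setIntegral_le_integral hg (.of_forall fun v => by positivity)
    _ = c * π ^ (finrank ℝ V / 2 : ℝ) := by rw [integral_const_mul, integral_exp_neg_sq_norm]

end Envelope

def closedShell (t s : ℝ) : Set R3 := {k | t ≤ ‖k‖ ∧ ‖k‖ ≤ s}

theorem volume_real_closedBall_fin_three {r : ℝ} (hr : 0 ≤ r) :
    volume.real (closedBall (0 : R3) r) = 4 * π / 3 * r ^ 3 := by
  rw [measureReal_def, EuclideanSpace.volume_closedBall_fin_three, ENNReal.toReal_mul,
    ENNReal.toReal_pow, ENNReal.toReal_ofReal hr, ENNReal.toReal_ofReal (by positivity)]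
  ring

theorem volume_real_shell_le {s t : ℝ} (ht : 0 ≤ t) (hts : t ≤ s) :
    volume.real (closedShell t s) ≤ 4 * π * s ^ 2 * (s - t) := by
  have hsub : closedShell t s ⊆ closedBall 0 s \ ball 0 t := fun k hk =>
    ⟨mem_closedBall_zero_iff.2 hk.2, fun h => (mem_ball_zero_iff.1 h).not_ge hk.1⟩
  have hball : ball (0 : R3) t ⊆ closedBall 0 s :=
    ball_subset_closedBall.trans (closedBall_subset_closedBall hts)
  have hcube : s ^ 3 - t ^ 3 ≤ 3 * s ^ 2 * (s - t) := by
    nlinarith [mul_nonneg (mul_nonneg (sub_nonneg.2 hts) (sub_nonneg.2 hts))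
      (by linarith : 0 ≤ 2 * s + t)]
  calc volume.real (closedShell t s)
      ≤ volume.real (closedBall (0 : R3) s \ ball 0 t) :=
        measureReal_mono hsub
          ((measure_mono Set.sdiff_subset).trans_lt measure_closedBall_lt_top).ne
    _ = 4 * π / 3 * (s ^ 3 - t ^ 3) := by
        rw [measureReal_sdiff hball measurableSet_ball measure_closedBall_lt_top.ne,
          volume_real_closedBall_fin_three (ht.trans hts), measureReal_def,
          ← Measure.addHaar_closedBall_eq_addHaar_ball, ← measureReal_def,
          volume_real_closedBall_fin_three ht]
        ring
    _ ≤ 4 * π * s ^ 2 * (s - t) := by nlinarith [pi_pos]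

theorem setIntegral_shell_le_of_le_norm_mul_exp {f : R3 → ℝ} {c s t : ℝ} (hc : 0 ≤ c) (ht : 0 ≤ t)
    (hts : t ≤ s) (hf0 : ∀ k, 0 ≤ f k)
    (hf : ∀ᵐ k, f k ≤ c * (‖k‖ * Real.exp (-(3 / 2) * ‖k‖ ^ 2))) :
    ∫ k in closedShell t s, f k ≤ c * s * (4 * π * s ^ 2 * (s - t)) := by
  have hfin : volume (closedShell t s) < ⊤ :=
    (measure_mono fun k hk => mem_closedBall_zero_iff.2 hk.2).trans_lt measure_closedBall_lt_top
  have hbound : ∀ᵐ k, k ∈ closedShell t s → ‖f k‖ ≤ c * s := by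
    filter_upwards [hf] with k hk hkS
    rw [Real.norm_of_nonneg (hf0 k)]
    refine hk.trans (mul_le_mul_of_nonneg_left ?_ hc)
    calc ‖k‖ * Real.exp (-(3 / 2) * ‖k‖ ^ 2) ≤ ‖k‖ :=
          mul_le_of_le_one_right (norm_nonneg k)
            (Real.exp_le_one_iff.2 (by nlinarith [sq_nonneg ‖k‖]))
      _ ≤ s := hkS.2
  calc ∫ k in closedShell t s, f k
      ≤ ‖∫ k in closedShell t s, f k‖ := Real.le_norm_self _
    _ ≤ c * s * volume.real (closedShell t s) :=
        norm_setIntegral_le_of_norm_le_const_ae' hfin hbound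
    _ ≤ c * s * (4 * π * s ^ 2 * (s - t)) :=
        mul_le_mul_of_nonneg_left (volume_real_shell_le ht hts) (by nlinarith [ht.trans hts])

theorem exp_div_mul_pi_rpow_le_C1_sq :
    Real.exp (1 / 15) / (2 * π) ^ 3 * π ^ (3 / 2 : ℝ) ≤ C1 ^ 2 * (Real.exp 1 / 2) := by
  have hsqrt : √π ≤ Real.exp (73 / 30) :=
    calc √π ≤ 2 := Real.sqrt_le_iff.2 ⟨by norm_num, by linarith [pi_lt_four]⟩
      _ ≤ 73 / 30 + 1 := by norm_num
      _ ≤ Real.exp (73 / 30) := Real.add_one_le_exp _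
  have hrpow : π ^ (3 / 2 : ℝ) = π * √π := by
    rw [Real.sqrt_eq_rpow, show (3 / 2 : ℝ) = 1 + 1 / 2 by norm_num,
      Real.rpow_add pi_pos, Real.rpow_one]
  have hexp : Real.exp (3 / 4) ^ 2 * Real.exp 1 = Real.exp (1 / 15) * Real.exp (73 / 30) := by
    rw [← Real.exp_nat_mul, ← Real.exp_add, ← Real.exp_add]; norm_num
  have hπ := pi_pos
  calc Real.exp (1 / 15) / (2 * π) ^ 3 * π ^ (3 / 2 : ℝ)
      = Real.exp (1 / 15) * √π / (8 * π ^ 2) := by rw [hrpow]; field_simp; ring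
    _ ≤ Real.exp (1 / 15) * Real.exp (73 / 30) / (8 * π ^ 2) := by gcongr
    _ = C1 ^ 2 * (Real.exp 1 / 2) := by rw [C1, ← hexp]; field_simp; ring

theorem exp_div_mul_four_pi_le_C2_sq : Real.exp (1 / 15) / (2 * π) ^ 3 * (4 * π) ≤ C2 ^ 2 := by
  have hπ := pi_pos
  have hC2 : C2 ^ 2 = Real.exp (1 / 2) / (2 * π ^ 2) := by
    rw [C2, div_pow, mul_pow, Real.sq_sqrt zero_le_two, ← Real.exp_nat_mul]
    field_simp
    norm_num
  calc Real.exp (1 / 15) / (2 * π) ^ 3 * (4 * π) = Real.exp (1 / 15) / (2 * π ^ 2) := by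
        field_simp; ring
    _ ≤ C2 ^ 2 := by rw [hC2]; gcongr; norm_num

theorem lemmaA1_fourth_general
    (α : ℝ) (hα0 : 0 < α)
    (ε : R3 → Fin 2 → Fin 3 → ℂ) (hε : Polarization ε)
    (s t : ℝ) (ht : 0 < t) (hts : t < s)
    (θ : ℂ) (hθ : ‖θ‖ ≤ 1/30)
    (x : R3) (j : Fin 3) :
    (∑ lam : Fin 2, ∫ k in {k : R3 | t ≤ ‖k‖ ∧ ‖k‖ ≤ s},
        ‖k‖ ^ 2 * ‖Gfun α ε θ x k lam j‖ ^ 2)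
      ≤ α ^ 3 * min (C1 ^ 2 * (Real.exp 1 / 2)) (C2 ^ 2 * s ^ 3 * (s - t)) := by
  set K := Real.exp (1 / 15) / (2 * (2 * π) ^ 3)
  have hK : 0 ≤ α ^ 3 * K := by positivity
  have hbound (lam : Fin 2) : ∀ᵐ k ∂volume, ‖k‖ ^ 2 * ‖Gfun α ε θ x k lam j‖ ^ 2 ≤
      α ^ 3 * K * (‖k‖ * Real.exp (-(3 / 2) * ‖k‖ ^ 2)) :=
    (hε.ae_norm_le_one lam j).mono fun k hk => norm_sq_mul_norm_Gfun_sq_le hα0.le hθ x k hk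
  have hA (lam : Fin 2) : ∫ k in closedShell t s,
      ‖k‖ ^ 2 * ‖Gfun α ε θ x k lam j‖ ^ 2 ≤ α ^ 3 * K * π ^ (3 / 2 : ℝ) := by
    simpa using setIntegral_le_of_le_norm_mul_exp hK (fun k => by positivity) (hbound lam) _
  have hB (lam : Fin 2) : ∫ k in closedShell t s,
      ‖k‖ ^ 2 * ‖Gfun α ε θ x k lam j‖ ^ 2 ≤ α ^ 3 * K * s * (4 * π * s ^ 2 * (s - t)) :=
    setIntegral_shell_le_of_le_norm_mul_exp hK ht.le hts.le (fun k => by positivity) (hbound lam)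
  rw [Fin.sum_univ_two, mul_min_of_nonneg _ _ (by positivity)]
  refine le_min ?_ ?_
  · calc _ ≤ α ^ 3 * K * π ^ (3 / 2 : ℝ) + α ^ 3 * K * π ^ (3 / 2 : ℝ) := add_le_add (hA 0) (hA 1)
      _ = α ^ 3 * (Real.exp (1 / 15) / (2 * π) ^ 3 * π ^ (3 / 2 : ℝ)) := by ring
      _ ≤ _ := mul_le_mul_of_nonneg_left exp_div_mul_pi_rpow_le_C1_sq (by positivity)
  · have hst : 0 ≤ s ^ 3 * (s - t) := by nlinarith [pow_pos (ht.trans hts) 3]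
    calc _ ≤ α ^ 3 * K * s * (4 * π * s ^ 2 * (s - t)) +
            α ^ 3 * K * s * (4 * π * s ^ 2 * (s - t)) :=
          add_le_add (hB 0) (hB 1)
      _ = α ^ 3 * (Real.exp (1 / 15) / (2 * π) ^ 3 * (4 * π)) * (s ^ 3 * (s - t)) := by ring
      _ ≤ α ^ 3 * C2 ^ 2 * (s ^ 3 * (s - t)) := by gcongr; exact exp_div_mul_four_pi_le_C2_sq
      _ = _ := by ring

/-- Lemma A.1, fourth inequality. -/
theorem lemmaA1_fourth
    (α : ℝ) (hα0 : 0 < α) (hα1 : α ≤ 1)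
    (ε : R3 → Fin 2 → Fin 3 → ℂ) (hε : Polarization ε)
    (s t : ℝ) (ht : 0 < t) (hts : t < s)
    (θ : ℂ) (hθ : ‖θ‖ ≤ 1/30)
    (x : R3) (j : Fin 3) :
    (∑ lam : Fin 2, ∫ k in {k : R3 | t ≤ ‖k‖ ∧ ‖k‖ ≤ s},
        ‖k‖ ^ 2 * ‖Gfun α ε θ x k lam j‖ ^ 2)
      ≤ α ^ 3 * min (C1 ^ 2 * (Real.exp 1 / 2)) (C2 ^ 2 * s ^ 3 * (s - t)) :=
  lemmaA1_fourth_general α hα0 ε hε s t ht hts θ hθ x j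

end
end

section
/- (Pointwise bound (a.0.0.2) from the proof of Remark A.3) For every θ ∈ ℂ, every x ∈ ℝ³, every k ∈ ℝ³ ∖ {0}, every λ ∈ {0,1} and j, q ∈ {1,2,3}: |∂_{x_q} 𝔾(θ)_j(x,(k,λ))| ≤ |G(θ)(0,(k,λ))| · |k| · ( α + 4‖η'‖_∞ + |x||k|·|η''(|x||k|)| ), and consequently |∂_{x_q} 𝔾(θ)_j(x,(k,λ))| ≤ |G(θ)(0,(k,λ))| · |k| · ( α + 4‖η'‖_∞ + 2‖η''‖_∞ ), where |G(θ)(0,(k,λ))| denotes the Euclidean norm of the vector G(θ)(0,(k,λ)) ∈ ℂ³. -/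
open MeasureTheory

noncomputable section

def CA : ℝ := Real.sqrt (Real.exp 1 / 2) * max (max C1 C1om) C2

/-- The sup norm of the first derivative, `‖η'‖_∞`. -/
def supD (η : ℝ → ℝ) : ℝ := ⨆ r : ℝ, |deriv η r|

/-- The sup norm of the second derivative, `‖η''‖_∞`. -/
def supD2 (η : ℝ → ℝ) : ℝ := ⨆ r : ℝ, |deriv (deriv η) r|

/-- The cutoff function `η`: smooth, nonincreasing on `[0,∞)`, `η = 1` on `(-∞,1]`,
`η = 0` on `[2,∞)`. -/
def Cutoff (η : ℝ → ℝ) : Prop :=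
  ContDiff ℝ (⊤ : ℕ∞) η ∧ AntitoneOn η (Set.Ici 0) ∧ (∀ r : ℝ, r ≤ 1 → η r = 1) ∧
    (∀ r : ℝ, 2 ≤ r → η r = 0)

/-- The function `Q(θ)(x,(k,λ)) = G(θ)(0,(k,λ)) · (η(|x||k|) e^θ x)`. -/
def Qfun (α : ℝ) (ε : R3 → Fin 2 → Fin 3 → ℂ) (η : ℝ → ℝ) (θ : ℂ)
    (x k : R3) (lam : Fin 2) : ℂ :=
  ∑ j : Fin 3, Gfun α ε θ 0 k lam j *
    (((η (‖x‖ * ‖k‖) : ℝ) : ℂ) * Complex.exp θ * ((x j : ℝ) : ℂ))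

/-- The Pauli–Fierz coupling function `𝔾(θ)_j = G(θ)_j − e^{−θ} ∂_{x_j} Q(θ)`. -/
def GPF (α : ℝ) (ε : R3 → Fin 2 → Fin 3 → ℂ) (η : ℝ → ℝ) (θ : ℂ)
    (x k : R3) (lam : Fin 2) (j : Fin 3) : ℂ :=
  Gfun α ε θ x k lam j -
    Complex.exp (-θ) *
      fderiv ℝ (fun y : R3 => Qfun α ε η θ y k lam) x (EuclideanSpace.single j (1:ℝ))

def C' (η : ℝ → ℝ) : ℝ := Real.sqrt 3 * CA * (4 + 4 * supD η + 2 * supD2 η)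

/-! ### Auxiliary lemmas on the cutoff function -/

section CutoffLemmas
variable {η : ℝ → ℝ}

lemma deriv_zero_lt_one (hη : Cutoff η) {t : ℝ} (ht : t < 1) : deriv η t = 0 := by
  have h : η =ᶠ[nhds t] fun _ => 1 :=
    Filter.eventuallyEq_of_mem (Iio_mem_nhds ht) (fun s hs => hη.2.2.1 s (le_of_lt hs))
  rw [h.deriv_eq, deriv_const]

lemma deriv_zero_two_lt (hη : Cutoff η) {t : ℝ} (ht : 2 < t) : deriv η t = 0 := by
  have h : η =ᶠ[nhds t] fun _ => 0 :=
    Filter.eventuallyEq_of_mem (Ioi_mem_nhds ht) (fun s hs => hη.2.2.2 s (le_of_lt hs))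
  rw [h.deriv_eq, deriv_const]

lemma deriv2_zero_lt_one (hη : Cutoff η) {t : ℝ} (ht : t < 1) : deriv (deriv η) t = 0 := by
  have h : deriv η =ᶠ[nhds t] fun _ => 0 :=
    Filter.eventuallyEq_of_mem (Iio_mem_nhds ht) (fun s hs => deriv_zero_lt_one hη hs)
  rw [h.deriv_eq, deriv_const]

lemma deriv2_zero_two_lt (hη : Cutoff η) {t : ℝ} (ht : 2 < t) : deriv (deriv η) t = 0 := by
  have h : deriv η =ᶠ[nhds t] fun _ => 0 :=
    Filter.eventuallyEq_of_mem (Ioi_mem_nhds ht) (fun s hs => deriv_zero_two_lt hη hs)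
  rw [h.deriv_eq, deriv_const]

lemma contDiff_deriv (hη : Cutoff η) : ContDiff ℝ (⊤ : ℕ∞) (deriv η) :=
  (contDiff_infty_iff_deriv.mp (hη.1.of_le (by simp))).2

lemma bdd_abs_of (f : ℝ → ℝ) (hf : Continuous f) (h1 : ∀ t, t < 1 → f t = 0)
    (h2 : ∀ t, 2 < t → f t = 0) : BddAbove (Set.range fun t => |f t|) := by
  obtain ⟨M, hM⟩ := (isCompact_Icc (a := (1:ℝ)) (b := 2)).exists_bound_of_continuousOn
    hf.continuousOn
  refine ⟨max M 0, ?_⟩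
  rintro _ ⟨t, rfl⟩
  rcases lt_or_ge t 1 with h | h
  · simp [h1 t h]
  rcases le_or_gt t 2 with h' | h'
  · exact le_max_of_le_left (by simpa using hM t ⟨h, h'⟩)
  · simp [h2 t h']

lemma abs_deriv_le (hη : Cutoff η) (t : ℝ) : |deriv η t| ≤ supD η :=
  le_ciSup (bdd_abs_of _ (contDiff_deriv hη).continuous
    (fun _ h => deriv_zero_lt_one hη h) (fun _ h => deriv_zero_two_lt hη h)) t

lemma abs_deriv2_le (hη : Cutoff η) (t : ℝ) : |deriv (deriv η) t| ≤ supD2 η :=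
  le_ciSup (bdd_abs_of _ ((contDiff_infty_iff_deriv.mp
      (contDiff_deriv hη)).2.continuous)
    (fun _ h => deriv2_zero_lt_one hη h) (fun _ h => deriv2_zero_two_lt hη h)) t

lemma supD_nonneg (η : ℝ → ℝ) : 0 ≤ supD η := Real.iSup_nonneg fun _ => abs_nonneg _
lemma supD2_nonneg (η : ℝ → ℝ) : 0 ≤ supD2 η := Real.iSup_nonneg fun _ => abs_nonneg _

lemma r_abs_deriv2_le (hη : Cutoff η) {r : ℝ} (hr : 0 ≤ r) :
    r * |deriv (deriv η) r| ≤ 2 * supD2 η := by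
  rcases le_or_gt r 2 with h | h
  · exact mul_le_mul h (abs_deriv2_le hη r) (abs_nonneg _) (by norm_num)
  · simp [deriv2_zero_two_lt hη h, mul_nonneg, supD2_nonneg η]

lemma hasDerivAt_eta (hη : Cutoff η) (t : ℝ) : HasDerivAt η (deriv η t) t :=
  ((hη.1.differentiable (by simp)) t).hasDerivAt

lemma hasDerivAt_deta (hη : Cutoff η) (t : ℝ) :
    HasDerivAt (deriv η) (deriv (deriv η) t) t :=
  (((contDiff_deriv hη).differentiable (by simp)) t).hasDerivAt

end CutoffLemmas

/-! ### Auxiliary lemmas on `R3` -/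

lemma hasFDerivAt_norm' {x : R3} (hx : x ≠ 0) :
    HasFDerivAt (fun y : R3 => ‖y‖) (‖x‖⁻¹ • (innerSL ℝ x : R3 →L[ℝ] ℝ)) x := by
  have h1 : HasFDerivAt (fun y : R3 => ‖y‖ ^ 2) (2 • innerSL ℝ x) x :=
    (hasStrictFDerivAt_norm_sq x).hasFDerivAt
  have hx0 : (0:ℝ) < ‖x‖ := norm_pos_iff.mpr hx
  have hx2 : (‖x‖ ^ 2 : ℝ) ≠ 0 := by positivity
  have h2 := (Real.hasDerivAt_sqrt hx2).comp_hasFDerivAt x h1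
  have e : (Real.sqrt ∘ fun y : R3 => ‖y‖ ^ 2) = fun y : R3 => ‖y‖ :=
    funext fun y => Real.sqrt_sq (norm_nonneg y)
  rw [e] at h2
  refine h2.congr_fderiv ?_
  rw [Real.sqrt_sq (norm_nonneg x)]
  ext v
  simp only [ContinuousLinearMap.smul_apply, smul_eq_mul, two_smul,
    ContinuousLinearMap.add_apply]
  field_simp
  ring

lemma abs_coord_le (x : R3) (i : Fin 3) : |x i| ≤ ‖x‖ := by
  have h : (inner ℝ x (EuclideanSpace.single i (1:ℝ)) : ℝ) = x i := by
    rw [EuclideanSpace.inner_single_right]; simp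
  have := abs_real_inner_le_norm x (EuclideanSpace.single i (1:ℝ))
  rw [h] at this
  simpa using this

/-! ### Lemmas on the coupling functions -/

section Coupling
variable {α : ℝ} {ε : R3 → Fin 2 → Fin 3 → ℂ} {η : ℝ → ℝ} {θ : ℂ} {k : R3} {lam : Fin 2}

lemma Gfun_eq (y : R3) (i : Fin 3) :
    Gfun α ε θ y k lam i =
      Gfun α ε θ 0 k lam i * Complex.exp (-Complex.I * (α:ℂ) * ((inner ℝ k y : ℝ) : ℂ)) := by
  simp [Gfun, inner_zero_right]; ring

lemma abs_Gfun_eq (y : R3) (i : Fin 3) :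
    ‖Gfun α ε θ y k lam i‖ = ‖Gfun α ε θ 0 k lam i‖ := by
  rw [Gfun_eq y i, norm_mul, Complex.norm_exp]
  simp

/-- The linear functional `y ↦ ∑ i, G0 i * y i`. -/
def Lclm (G0 : Fin 3 → ℂ) : R3 →L[ℝ] ℂ :=
  ∑ i : Fin 3, G0 i • ((Complex.ofRealCLM : ℝ →L[ℝ] ℂ).comp
    (EuclideanSpace.proj i : R3 →L[ℝ] ℝ))

lemma Lclm_apply (G0 : Fin 3 → ℂ) (y : R3) :
    Lclm G0 y = ∑ i : Fin 3, G0 i * ((y i : ℝ) : ℂ) := by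
  simp [Lclm, smul_eq_mul]

lemma Lclm_single (G0 : Fin 3 → ℂ) (q : Fin 3) :
    Lclm G0 (EuclideanSpace.single q (1:ℝ)) = G0 q := by
  rw [Lclm_apply, Finset.sum_eq_single q]
  · simp
  · intro i _ hi; simp [EuclideanSpace.single_apply, hi]
  · simp

lemma abs_Lclm_le (G0 : Fin 3 → ℂ) (y : R3) :
    ‖Lclm G0 y‖ ≤ Real.sqrt (∑ i : Fin 3, ‖G0 i‖ ^ 2) * ‖y‖ := by
  rw [Lclm_apply]
  calc ‖∑ i : Fin 3, G0 i * ((y i : ℝ) : ℂ)‖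
      ≤ ∑ i : Fin 3, ‖G0 i * ((y i : ℝ) : ℂ)‖ :=
        norm_sum_le _ _
    _ = ∑ i : Fin 3, ‖G0 i‖ * |y i| := by
        simp [norm_mul, Complex.norm_real]
    _ ≤ Real.sqrt (∑ i : Fin 3, ‖G0 i‖ ^ 2) *
          Real.sqrt (∑ i : Fin 3, |y i| ^ 2) := by
        have h := Finset.sum_mul_sq_le_sq_mul_sq Finset.univ
          (fun i : Fin 3 => ‖G0 i‖) (fun i => |y i|)
        have hnn : (0:ℝ) ≤ ∑ i : Fin 3, ‖G0 i‖ * |y i| :=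
          Finset.sum_nonneg fun i _ => mul_nonneg (norm_nonneg _) (abs_nonneg _)
        rw [← Real.sqrt_mul (Finset.sum_nonneg fun i _ => sq_nonneg _)]
        exact (Real.le_sqrt hnn (by positivity)).mpr h
    _ = Real.sqrt (∑ i : Fin 3, ‖G0 i‖ ^ 2) * ‖y‖ := by
        simp [EuclideanSpace.norm_eq]

lemma hasFDerivAt_Gfun (x : R3) (i : Fin 3) :
    HasFDerivAt (fun y : R3 => Gfun α ε θ y k lam i)
      (Gfun α ε θ 0 k lam i •
        (Complex.exp (-Complex.I * (α:ℂ) * ((inner ℝ k x : ℝ) : ℂ)) •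
          ((-Complex.I * (α:ℂ)) •
            ((Complex.ofRealCLM : ℝ →L[ℝ] ℂ).comp (innerSL ℝ k))))) x := by
  have hW : HasFDerivAt (fun y : R3 => -Complex.I * (α:ℂ) * ((inner ℝ k y : ℝ) : ℂ))
      ((-Complex.I * (α:ℂ)) • ((Complex.ofRealCLM : ℝ →L[ℝ] ℂ).comp (innerSL ℝ k))) x := by
    refine (((-Complex.I * (α:ℂ)) • ((Complex.ofRealCLM : ℝ →L[ℝ] ℂ).comp
      (innerSL ℝ k))).hasFDerivAt).congr_of_eventuallyEq
      (Filter.Eventually.of_forall fun z => ?_)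
    simp [smul_eq_mul]
  have h := (hW.cexp).const_mul (Gfun α ε θ 0 k lam i)
  exact h.congr_of_eventuallyEq (Filter.Eventually.of_forall fun z => Gfun_eq z i)

lemma fderiv_Qfun_single (hη : Cutoff η) {y : R3} (hy : y ≠ 0) (j : Fin 3) :
    fderiv ℝ (fun z : R3 => Qfun α ε η θ z k lam) y (EuclideanSpace.single j (1:ℝ))
      = Complex.exp θ *
        (((η (‖y‖ * ‖k‖) : ℝ) : ℂ) * Gfun α ε θ 0 k lam j
          + (∑ i : Fin 3, Gfun α ε θ 0 k lam i * ((y i : ℝ) : ℂ)) *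
            ((deriv η (‖y‖ * ‖k‖) * (‖k‖ * (‖y‖⁻¹ * y j)) : ℝ) : ℂ)) := by
  have hnorm := hasFDerivAt_norm' hy
  have hr := hnorm.mul_const ‖k‖
  have hu := (hasDerivAt_eta hη (‖y‖ * ‖k‖)).comp_hasFDerivAt y hr
  have hcu := (Complex.ofRealCLM.hasFDerivAt).comp y hu
  have hF1 := hcu.mul_const (Complex.exp θ)
  have hL : HasFDerivAt (fun z : R3 => ∑ i : Fin 3, Gfun α ε θ 0 k lam i * ((z i : ℝ) : ℂ))
      (Lclm (fun i => Gfun α ε θ 0 k lam i)) y := by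
    have h := (Lclm (fun i => Gfun α ε θ 0 k lam i)).hasFDerivAt (x := y)
    rwa [show ⇑(Lclm (fun i => Gfun α ε θ 0 k lam i)) =
      fun z : R3 => ∑ i : Fin 3, Gfun α ε θ 0 k lam i * ((z i : ℝ) : ℂ) from
      funext (Lclm_apply _)] at h
  have hQ : HasFDerivAt (fun z : R3 => Qfun α ε η θ z k lam)
      ((((η (‖y‖ * ‖k‖) : ℝ) : ℂ) * Complex.exp θ) • Lclm (fun i => Gfun α ε θ 0 k lam i) +
        (∑ i : Fin 3, Gfun α ε θ 0 k lam i * ((y i : ℝ) : ℂ)) •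
          (Complex.exp θ • Complex.ofRealCLM.comp
            (deriv η (‖y‖ * ‖k‖) • ‖k‖ • ‖y‖⁻¹ • (innerSL ℝ) y))) y := by
    refine (hF1.mul hL).congr_of_eventuallyEq
      (Filter.Eventually.of_forall (fun z => ?_))
    simp only [Function.comp_apply, Complex.ofRealCLM_apply, Qfun, Finset.mul_sum, Pi.mul_apply]
    exact Finset.sum_congr rfl fun i _ => by ring
  rw [hQ.fderiv]
  simp only [ContinuousLinearMap.add_apply, ContinuousLinearMap.coe_smul', Pi.smul_apply,
    ContinuousLinearMap.comp_apply, ContinuousLinearMap.smul_apply, smul_eq_mul,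
    Complex.ofRealCLM_apply, innerSL_apply_apply, Lclm_single, Function.comp_apply,
    EuclideanSpace.inner_single_right, conj_trivial, one_mul, Complex.real_smul]
  push_cast
  ring

lemma GPF_eq (hη : Cutoff η) {y : R3} (hy : y ≠ 0) (j : Fin 3) :
    GPF α ε η θ y k lam j = Gfun α ε θ y k lam j -
      (((η (‖y‖ * ‖k‖) : ℝ) : ℂ) * Gfun α ε θ 0 k lam j +
        (∑ i : Fin 3, Gfun α ε θ 0 k lam i * ((y i : ℝ) : ℂ)) *
          ((deriv η (‖y‖ * ‖k‖) * (‖k‖ * (‖y‖⁻¹ * y j)) : ℝ) : ℂ)) := by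
  rw [GPF, fderiv_Qfun_single hη hy, ← mul_assoc, ← Complex.exp_add, neg_add_cancel,
    Complex.exp_zero, one_mul]

end Coupling

set_option maxHeartbeats 3200000 in
/-- Pointwise bound (a.0.0.2) from the proof of Remark A.3. -/
theorem pointwise_bound_a002
    (α : ℝ) (hα0 : 0 < α) (hα1 : α ≤ 1)
    (ε : R3 → Fin 2 → Fin 3 → ℂ) (hε : Polarization ε)
    (η : ℝ → ℝ) (hη : Cutoff η)
    (θ : ℂ) (x : R3) (k : R3) (hk : k ≠ 0) (lam : Fin 2) (j q : Fin 3) :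
    ‖(fderiv ℝ (fun y : R3 => GPF α ε η θ y k lam j) x
          (EuclideanSpace.single q (1:ℝ)))‖
      ≤ Real.sqrt (∑ i : Fin 3, ‖Gfun α ε θ 0 k lam i‖ ^ 2) * ‖k‖ *
          (α + 4 * supD η + ‖x‖ * ‖k‖ * |deriv (deriv η) (‖x‖ * ‖k‖)|) ∧
    ‖(fderiv ℝ (fun y : R3 => GPF α ε η θ y k lam j) x
          (EuclideanSpace.single q (1:ℝ)))‖
      ≤ Real.sqrt (∑ i : Fin 3, ‖Gfun α ε θ 0 k lam i‖ ^ 2) * ‖k‖ *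
          (α + 4 * supD η + 2 * supD2 η) := by
  classical
  have hS1 := supD_nonneg η
  have hS2 := supD2_nonneg η
  have hc : (0:ℝ) < ‖k‖ := norm_pos_iff.mpr hk
  set B := Real.sqrt (∑ i : Fin 3, ‖Gfun α ε θ 0 k lam i‖ ^ 2) with hB
  have hBnn : 0 ≤ B := Real.sqrt_nonneg _
  have hG0le : ∀ i : Fin 3, ‖Gfun α ε θ 0 k lam i‖ ≤ B := by
    intro i
    have h1 : ‖Gfun α ε θ 0 k lam i‖ ^ 2 ≤
        ∑ i' : Fin 3, ‖Gfun α ε θ 0 k lam i'‖ ^ 2 :=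
      Finset.single_le_sum (f := fun i' : Fin 3 => ‖Gfun α ε θ 0 k lam i'‖ ^ 2)
        (fun i' _ => sq_nonneg _) (Finset.mem_univ i)
    calc ‖Gfun α ε θ 0 k lam i‖
        = Real.sqrt (‖Gfun α ε θ 0 k lam i‖ ^ 2) :=
          (Real.sqrt_sq (norm_nonneg _)).symm
      _ ≤ B := Real.sqrt_le_sqrt h1
  have hr0 : (0:ℝ) ≤ ‖x‖ * ‖k‖ := by positivity
  have key : ‖fderiv ℝ (fun y : R3 => GPF α ε η θ y k lam j) x
      (EuclideanSpace.single q (1:ℝ))‖ ≤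
      B * ‖k‖ * (α + 4 * supD η + ‖x‖ * ‖k‖ * |deriv (deriv η) (‖x‖ * ‖k‖)|) := by
    have hE : (0:ℝ) ≤ 4 * supD η + ‖x‖ * ‖k‖ * |deriv (deriv η) (‖x‖ * ‖k‖)| := by positivity
    rcases lt_or_ge (‖x‖ * ‖k‖) 1 with hsm | hbig
    · -- Case A : `‖x‖‖k‖ < 1`, the cutoff is constant near `x`.
      have hU : IsOpen {y : R3 | ‖y‖ * ‖k‖ < 1} :=
        isOpen_lt (continuous_norm.mul continuous_const) continuous_const
      have hmem : {y : R3 | ‖y‖ * ‖k‖ < 1} ∈ nhds x := hU.mem_nhds hsm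
      have hGPFev : (fun y : R3 => GPF α ε η θ y k lam j) =ᶠ[nhds x]
          (fun y : R3 => Gfun α ε θ y k lam j - Gfun α ε θ 0 k lam j) := by
        filter_upwards [hmem] with z hz
        have hQz : ∀ w ∈ {y : R3 | ‖y‖ * ‖k‖ < 1}, Qfun α ε η θ w k lam =
            (Complex.exp θ • Lclm (fun i => Gfun α ε θ 0 k lam i)) w := by
          intro w hw
          simp only [Qfun, hη.2.2.1 _ (le_of_lt hw), ContinuousLinearMap.coe_smul',
            Pi.smul_apply, Lclm_apply, smul_eq_mul, Finset.mul_sum, Complex.ofReal_one]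
          exact Finset.sum_congr rfl fun i _ => by ring
        have hfQ : fderiv ℝ (fun w : R3 => Qfun α ε η θ w k lam) z =
            Complex.exp θ • Lclm (fun i => Gfun α ε θ 0 k lam i) := by
          have hder := (Complex.exp θ • Lclm (fun i => Gfun α ε θ 0 k lam i)).hasFDerivAt (x := z)
          exact (hder.congr_of_eventuallyEq
            (Filter.eventuallyEq_of_mem (hU.mem_nhds hz) hQz)).fderiv
        rw [GPF, hfQ]
        simp only [ContinuousLinearMap.coe_smul', Pi.smul_apply, Lclm_single, smul_eq_mul]
        rw [← mul_assoc, ← Complex.exp_add, neg_add_cancel, Complex.exp_zero, one_mul]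
      have hg := ((hasFDerivAt_Gfun (α := α) (ε := ε) (θ := θ) (k := k) (lam := lam) x
        j).sub_const (Gfun α ε θ 0 k lam j)).congr_of_eventuallyEq hGPFev
      rw [hg.fderiv]
      have hval : ‖(Gfun α ε θ 0 k lam j •
          (Complex.exp (-Complex.I * (α:ℂ) * ((inner ℝ k x : ℝ) : ℂ)) •
            ((-Complex.I * (α:ℂ)) •
              ((Complex.ofRealCLM : ℝ →L[ℝ] ℂ).comp (innerSL ℝ k)))))
            (EuclideanSpace.single q (1:ℝ))‖
          = ‖Gfun α ε θ 0 k lam j‖ * (α * |k q|) := by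
        simp only [ContinuousLinearMap.coe_smul', Pi.smul_apply,
          ContinuousLinearMap.comp_apply, Complex.ofRealCLM_apply, innerSL_apply_apply,
          EuclideanSpace.inner_single_right, conj_trivial, one_mul, smul_eq_mul]
        rw [norm_mul, norm_mul, norm_mul, norm_mul]
        simp [Complex.norm_exp, Complex.norm_real, abs_of_pos hα0]
      rw [hval]
      have h1 : ‖Gfun α ε θ 0 k lam j‖ * (α * |k q|) ≤ B * (α * ‖k‖) :=
        mul_le_mul (hG0le j) (mul_le_mul_of_nonneg_left (abs_coord_le k q) hα0.le)
          (by positivity) hBnn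
      have h2 : 0 ≤ B * ‖k‖ * (4 * supD η + ‖x‖ * ‖k‖ * |deriv (deriv η) (‖x‖ * ‖k‖)|) :=
        mul_nonneg (mul_nonneg hBnn hc.le) hE
      nlinarith [h1, h2]
    · -- Case B : `x ≠ 0`.
      have hx : x ≠ 0 := by
        rintro rfl
        rw [norm_zero, zero_mul] at hbig
        linarith
      have hN : (0:ℝ) < ‖x‖ := norm_pos_iff.mpr hx
      have hnorm := hasFDerivAt_norm' hx
      have hrr := hnorm.mul_const ‖k‖
      have hu := (hasDerivAt_eta hη (‖x‖ * ‖k‖)).comp_hasFDerivAt x hrr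
      have hcu := (Complex.ofRealCLM.hasFDerivAt).comp x hu
      have ht1 := hcu.mul_const (Gfun α ε θ 0 k lam j)
      have hw := (hasDerivAt_deta hη (‖x‖ * ‖k‖)).comp_hasFDerivAt x hrr
      have hinv := (hasDerivAt_inv hN.ne').comp_hasFDerivAt x hnorm
      have hproj := (EuclideanSpace.proj j : R3 →L[ℝ] ℝ).hasFDerivAt (x := x)
      have hip := hinv.mul hproj
      have hcc := hip.const_mul ‖k‖
      have hv := hw.mul hcc
      have hcv := (Complex.ofRealCLM.hasFDerivAt).comp x hv
      have hL : HasFDerivAt (fun z : R3 => ∑ i : Fin 3, Gfun α ε θ 0 k lam i * ((z i : ℝ) : ℂ))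
          (Lclm (fun i => Gfun α ε θ 0 k lam i)) x := by
        have h := (Lclm (fun i => Gfun α ε θ 0 k lam i)).hasFDerivAt (x := x)
        rwa [show ⇑(Lclm (fun i => Gfun α ε θ 0 k lam i)) =
          fun z : R3 => ∑ i : Fin 3, Gfun α ε θ 0 k lam i * ((z i : ℝ) : ℂ) from
          funext (Lclm_apply _)] at h
      have ht2 := hL.mul hcv
      have hA := ht1.add ht2
      have hg := hasFDerivAt_Gfun (α := α) (ε := ε) (θ := θ) (k := k) (lam := lam) x j
      set a := deriv η (‖x‖ * ‖k‖) with ha_def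
      set b := deriv (deriv η) (‖x‖ * ‖k‖) with hb_def
      have hclean : HasFDerivAt
          (fun y : R3 => Gfun α ε θ y k lam j -
            (((η (‖y‖ * ‖k‖) : ℝ) : ℂ) * Gfun α ε θ 0 k lam j +
              (∑ i : Fin 3, Gfun α ε θ 0 k lam i * ((y i : ℝ) : ℂ)) *
                ((deriv η (‖y‖ * ‖k‖) * (‖k‖ * (‖y‖⁻¹ * y j)) : ℝ) : ℂ)))
          ((Gfun α ε θ 0 k lam j •
              (Complex.exp (-Complex.I * (α:ℂ) * ((inner ℝ k x : ℝ) : ℂ)) •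
                ((-Complex.I * (α:ℂ)) •
                  ((Complex.ofRealCLM : ℝ →L[ℝ] ℂ).comp (innerSL ℝ k))))) -
            ((Gfun α ε θ 0 k lam j •
                Complex.ofRealCLM.comp (a • ‖k‖ • ‖x‖⁻¹ • (innerSL ℝ) x)) +
              ((∑ i : Fin 3, Gfun α ε θ 0 k lam i * ((x i : ℝ) : ℂ)) •
                  Complex.ofRealCLM.comp
                    (a • (‖k‖ • (‖x‖⁻¹ • (EuclideanSpace.proj j : R3 →L[ℝ] ℝ) +
                        (x j) • (-(‖x‖ ^ 2)⁻¹ • ‖x‖⁻¹ • (innerSL ℝ) x))) +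
                      (‖k‖ * (‖x‖⁻¹ * x j)) • (b • ‖k‖ • ‖x‖⁻¹ • (innerSL ℝ) x)) +
                ((a * (‖k‖ * (‖x‖⁻¹ * x j)) : ℝ) : ℂ) •
                  Lclm (fun i => Gfun α ε θ 0 k lam i)))) x := hg.sub hA
      have hev : (fun y : R3 => GPF α ε η θ y k lam j) =ᶠ[nhds x]
          (fun y : R3 => Gfun α ε θ y k lam j -
            (((η (‖y‖ * ‖k‖) : ℝ) : ℂ) * Gfun α ε θ 0 k lam j +
              (∑ i : Fin 3, Gfun α ε θ 0 k lam i * ((y i : ℝ) : ℂ)) *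
                ((deriv η (‖y‖ * ‖k‖) * (‖k‖ * (‖y‖⁻¹ * y j)) : ℝ) : ℂ))) := by
        filter_upwards [isOpen_compl_singleton.mem_nhds hx] with z hz
        exact GPF_eq hη hz j
      rw [hev.fderiv_eq, hclean.fderiv]
      have hval : ((Gfun α ε θ 0 k lam j •
              (Complex.exp (-Complex.I * (α:ℂ) * ((inner ℝ k x : ℝ) : ℂ)) •
                ((-Complex.I * (α:ℂ)) •
                  ((Complex.ofRealCLM : ℝ →L[ℝ] ℂ).comp (innerSL ℝ k))))) -
            ((Gfun α ε θ 0 k lam j •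
                Complex.ofRealCLM.comp (a • ‖k‖ • ‖x‖⁻¹ • (innerSL ℝ) x)) +
              ((∑ i : Fin 3, Gfun α ε θ 0 k lam i * ((x i : ℝ) : ℂ)) •
                  Complex.ofRealCLM.comp
                    (a • (‖k‖ • (‖x‖⁻¹ • (EuclideanSpace.proj j : R3 →L[ℝ] ℝ) +
                        (x j) • (-(‖x‖ ^ 2)⁻¹ • ‖x‖⁻¹ • (innerSL ℝ) x))) +
                      (‖k‖ * (‖x‖⁻¹ * x j)) • (b • ‖k‖ • ‖x‖⁻¹ • (innerSL ℝ) x)) +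
                ((a * (‖k‖ * (‖x‖⁻¹ * x j)) : ℝ) : ℂ) •
                  Lclm (fun i => Gfun α ε θ 0 k lam i))))
            (EuclideanSpace.single q (1:ℝ))
          = Gfun α ε θ 0 k lam j * Complex.exp (-Complex.I * (α:ℂ) * ((inner ℝ k x : ℝ) : ℂ)) *
              (-Complex.I * (α:ℂ) * ((k q : ℝ) : ℂ))
            - (((a * (‖k‖ * (‖x‖⁻¹ * x q)) : ℝ) : ℂ) * Gfun α ε θ 0 k lam j
              + (∑ i : Fin 3, Gfun α ε θ 0 k lam i * ((x i : ℝ) : ℂ)) *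
                  (((a * (‖k‖ * (‖x‖⁻¹ * (if j = q then (1:ℝ) else 0)
                      - (‖x‖ ^ 2)⁻¹ * (‖x‖⁻¹ * x q) * x j))
                    + b * (‖k‖ * (‖x‖⁻¹ * x q)) * (‖k‖ * (‖x‖⁻¹ * x j)) : ℝ)) : ℂ)
              + ((a * (‖k‖ * (‖x‖⁻¹ * x j)) : ℝ) : ℂ) * Gfun α ε θ 0 k lam q) := by
        simp only [ContinuousLinearMap.coe_sub', Pi.sub_apply, ContinuousLinearMap.add_apply,
          ContinuousLinearMap.coe_smul', Pi.smul_apply, ContinuousLinearMap.comp_apply,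
          ContinuousLinearMap.smul_apply, Complex.ofRealCLM_apply, innerSL_apply_apply,
          EuclideanSpace.inner_single_right, conj_trivial, smul_eq_mul, Complex.real_smul,
          Lclm_single, PiLp.proj_apply, EuclideanSpace.single_apply, one_mul]
        push_cast
        ring
      rw [hval]
      -- now the explicit bound
      have hxq := abs_coord_le x q
      have hxj := abs_coord_le x j
      have hkq := abs_coord_le k q
      have ha := abs_deriv_le hη (‖x‖ * ‖k‖)
      rw [← ha_def] at ha
      have hNinv : (0:ℝ) < ‖x‖⁻¹ := by positivity
      have hu1 : |‖x‖⁻¹ * x q| ≤ 1 := by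
        rw [abs_mul, abs_inv, abs_norm]
        calc ‖x‖⁻¹ * |x q| ≤ ‖x‖⁻¹ * ‖x‖ := by
              exact mul_le_mul_of_nonneg_left hxq hNinv.le
          _ = 1 := inv_mul_cancel₀ hN.ne'
      have hv1 : |‖x‖⁻¹ * x j| ≤ 1 := by
        rw [abs_mul, abs_inv, abs_norm]
        calc ‖x‖⁻¹ * |x j| ≤ ‖x‖⁻¹ * ‖x‖ := by
              exact mul_le_mul_of_nonneg_left hxj hNinv.le
          _ = 1 := inv_mul_cancel₀ hN.ne'
      set G0 : Fin 3 → ℂ := fun i => Gfun α ε θ 0 k lam i with hG0def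
      set Lx : ℂ := ∑ i : Fin 3, G0 i * ((x i : ℝ) : ℂ) with hLx_def
      have hLx : ‖Lx‖ ≤ B * ‖x‖ := by
        have h := abs_Lclm_le G0 x
        rw [Lclm_apply] at h
        exact h
      -- the four terms
      have e0 : ‖G0 j * Complex.exp (-Complex.I * (α:ℂ) *
            ((inner ℝ k x : ℝ) : ℂ)) * (-Complex.I * (α:ℂ) * ((k q : ℝ) : ℂ))‖
          ≤ B * (α * ‖k‖) := by
        rw [norm_mul, norm_mul]
        have h1 : ‖Complex.exp (-Complex.I * (α:ℂ) * ((inner ℝ k x : ℝ) : ℂ))‖ = 1 := by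
          rw [Complex.norm_exp]; simp
        have h2 : ‖-Complex.I * (α:ℂ) * ((k q : ℝ) : ℂ)‖ = α * |k q| := by
          simp [norm_mul, Complex.norm_real, abs_of_pos hα0]
        rw [h1, h2, mul_one]
        exact mul_le_mul (hG0le j) (mul_le_mul_of_nonneg_left hkq hα0.le)
          (by positivity) hBnn
      have e1 : ‖((a * (‖k‖ * (‖x‖⁻¹ * x q)) : ℝ) : ℂ) * G0 j‖
          ≤ supD η * ‖k‖ * B := by
        rw [norm_mul, Complex.norm_real, Real.norm_eq_abs]
        have h1 : |a * (‖k‖ * (‖x‖⁻¹ * x q))| ≤ supD η * ‖k‖ := by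
          rw [abs_mul, abs_mul, abs_norm]
          calc |a| * (‖k‖ * |‖x‖⁻¹ * x q|) ≤ supD η * (‖k‖ * 1) := by
                apply mul_le_mul ha (mul_le_mul_of_nonneg_left hu1 hc.le)
                  (by positivity) hS1
            _ = supD η * ‖k‖ := by ring
        calc |a * (‖k‖ * (‖x‖⁻¹ * x q))| * ‖G0 j‖
            ≤ (supD η * ‖k‖) * B :=
              mul_le_mul h1 (hG0le j) (norm_nonneg _) (by positivity)
          _ = supD η * ‖k‖ * B := by ring
      have e3 : ‖((a * (‖k‖ * (‖x‖⁻¹ * x j)) : ℝ) : ℂ) * G0 q‖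
          ≤ supD η * ‖k‖ * B := by
        rw [norm_mul, Complex.norm_real, Real.norm_eq_abs]
        have h1 : |a * (‖k‖ * (‖x‖⁻¹ * x j))| ≤ supD η * ‖k‖ := by
          rw [abs_mul, abs_mul, abs_norm]
          calc |a| * (‖k‖ * |‖x‖⁻¹ * x j|) ≤ supD η * (‖k‖ * 1) := by
                apply mul_le_mul ha (mul_le_mul_of_nonneg_left hv1 hc.le)
                  (by positivity) hS1
            _ = supD η * ‖k‖ := by ring
        calc |a * (‖k‖ * (‖x‖⁻¹ * x j))| * ‖G0 q‖
            ≤ (supD η * ‖k‖) * B :=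
              mul_le_mul h1 (hG0le q) (norm_nonneg _) (by positivity)
          _ = supD η * ‖k‖ * B := by ring
      have e2 : ‖Lx *
            (((a * (‖k‖ * (‖x‖⁻¹ * (if j = q then (1:ℝ) else 0)
                - (‖x‖ ^ 2)⁻¹ * (‖x‖⁻¹ * x q) * x j))
              + b * (‖k‖ * (‖x‖⁻¹ * x q)) * (‖k‖ * (‖x‖⁻¹ * x j)) : ℝ)) : ℂ)‖
          ≤ B * (2 * supD η * ‖k‖ + (‖x‖ * ‖k‖) * |b| * ‖k‖) := by
        rw [norm_mul, Complex.norm_real, Real.norm_eq_abs]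
        set M : ℝ := a * (‖k‖ * (‖x‖⁻¹ * (if j = q then (1:ℝ) else 0)
            - (‖x‖ ^ 2)⁻¹ * (‖x‖⁻¹ * x q) * x j))
          + b * (‖k‖ * (‖x‖⁻¹ * x q)) * (‖k‖ * (‖x‖⁻¹ * x j)) with hM_def
        have hMeq : M = ‖x‖⁻¹ * (a * ‖k‖ * ((if j = q then (1:ℝ) else 0)
            - (‖x‖⁻¹ * x q) * (‖x‖⁻¹ * x j))
            + b * ((‖x‖ * ‖k‖) * ‖k‖) * ((‖x‖⁻¹ * x q) * (‖x‖⁻¹ * x j))) := by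
          rcases eq_or_ne j q with hjq | hjq <;>
            · simp only [hM_def, hjq, if_pos, if_neg, ite_true, ite_false]
              field_simp
        have hδ : |(if j = q then (1:ℝ) else 0)| ≤ 1 := by
          split_ifs <;> norm_num
        have huv : |(‖x‖⁻¹ * x q) * (‖x‖⁻¹ * x j)| ≤ 1 := by
          rw [abs_mul]
          exact mul_le_one₀ hu1 (abs_nonneg _) hv1
        have hsub : |(if j = q then (1:ℝ) else 0)
            - (‖x‖⁻¹ * x q) * (‖x‖⁻¹ * x j)| ≤ 2 := by
          have h := abs_sub (if j = q then (1:ℝ) else 0) ((‖x‖⁻¹ * x q) * (‖x‖⁻¹ * x j))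
          linarith [hδ, huv]
        have hterm1 : |a * ‖k‖ * ((if j = q then (1:ℝ) else 0)
            - (‖x‖⁻¹ * x q) * (‖x‖⁻¹ * x j))| ≤ supD η * ‖k‖ * 2 := by
          rw [abs_mul, abs_mul, abs_norm]
          exact mul_le_mul (mul_le_mul ha le_rfl hc.le hS1) hsub (abs_nonneg _)
            (by positivity)
        have hterm2 : |b * ((‖x‖ * ‖k‖) * ‖k‖) * ((‖x‖⁻¹ * x q) * (‖x‖⁻¹ * x j))|
            ≤ |b| * ((‖x‖ * ‖k‖) * ‖k‖) := by
          rw [abs_mul, abs_mul]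
          rw [abs_of_nonneg (by positivity : (0:ℝ) ≤ ‖x‖ * ‖k‖ * ‖k‖)]
          calc |b| * (‖x‖ * ‖k‖ * ‖k‖) * |(‖x‖⁻¹ * x q) * (‖x‖⁻¹ * x j)|
              ≤ |b| * (‖x‖ * ‖k‖ * ‖k‖) * 1 :=
                mul_le_mul_of_nonneg_left huv (by positivity)
            _ = |b| * ((‖x‖ * ‖k‖) * ‖k‖) := by ring
        have hMle : |M| ≤ ‖x‖⁻¹ * (2 * supD η * ‖k‖ + (‖x‖ * ‖k‖) * |b| * ‖k‖) := by
          rw [hMeq, abs_mul, abs_inv, abs_norm]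
          apply mul_le_mul_of_nonneg_left _ hNinv.le
          calc |a * ‖k‖ * ((if j = q then (1:ℝ) else 0)
                  - (‖x‖⁻¹ * x q) * (‖x‖⁻¹ * x j))
                + b * ((‖x‖ * ‖k‖) * ‖k‖) * ((‖x‖⁻¹ * x q) * (‖x‖⁻¹ * x j))|
              ≤ |a * ‖k‖ * ((if j = q then (1:ℝ) else 0)
                  - (‖x‖⁻¹ * x q) * (‖x‖⁻¹ * x j))|
                + |b * ((‖x‖ * ‖k‖) * ‖k‖) * ((‖x‖⁻¹ * x q) * (‖x‖⁻¹ * x j))| :=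
              abs_add_le _ _
            _ ≤ supD η * ‖k‖ * 2 + |b| * ((‖x‖ * ‖k‖) * ‖k‖) :=
              add_le_add hterm1 hterm2
            _ = 2 * supD η * ‖k‖ + (‖x‖ * ‖k‖) * |b| * ‖k‖ := by ring
        calc ‖Lx‖ * |M|
            ≤ (B * ‖x‖) * (‖x‖⁻¹ * (2 * supD η * ‖k‖ + (‖x‖ * ‖k‖) * |b| * ‖k‖)) :=
              mul_le_mul hLx hMle (abs_nonneg M) (by positivity)
          _ = B * (‖x‖ * ‖x‖⁻¹) * (2 * supD η * ‖k‖ + (‖x‖ * ‖k‖) * |b| * ‖k‖) := by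
              ring
          _ = B * (2 * supD η * ‖k‖ + (‖x‖ * ‖k‖) * |b| * ‖k‖) := by
              rw [mul_inv_cancel₀ hN.ne', mul_one]
      -- combine
      set T0 : ℂ := G0 j * Complex.exp (-Complex.I * (α:ℂ) * ((inner ℝ k x : ℝ) : ℂ)) *
          (-Complex.I * (α:ℂ) * ((k q : ℝ) : ℂ)) with hT0
      set A1 : ℂ := ((a * (‖k‖ * (‖x‖⁻¹ * x q)) : ℝ) : ℂ) * G0 j with hA1
      set A2 : ℂ := Lx * (((a * (‖k‖ * (‖x‖⁻¹ * (if j = q then (1:ℝ) else 0)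
            - (‖x‖ ^ 2)⁻¹ * (‖x‖⁻¹ * x q) * x j))
          + b * (‖k‖ * (‖x‖⁻¹ * x q)) * (‖k‖ * (‖x‖⁻¹ * x j)) : ℝ)) : ℂ) with hA2
      set A3 : ℂ := ((a * (‖k‖ * (‖x‖⁻¹ * x j)) : ℝ) : ℂ) * G0 q with hA3
      calc ‖T0 - (A1 + A2 + A3)‖
          ≤ ‖T0‖ + ‖A1 + A2 + A3‖ := by
            exact norm_sub_le T0 (A1 + A2 + A3)
        _ ≤ ‖T0‖ + (‖A1‖ + ‖A2‖ + ‖A3‖) := by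
            have h1 := norm_add_le (A1 + A2) A3
            have h2 := norm_add_le A1 A2
            linarith
        _ ≤ B * (α * ‖k‖) + (supD η * ‖k‖ * B
              + B * (2 * supD η * ‖k‖ + (‖x‖ * ‖k‖) * |b| * ‖k‖)
              + supD η * ‖k‖ * B) := by
            linarith [e0, e1, e2, e3]
        _ = B * ‖k‖ * (α + 4 * supD η + ‖x‖ * ‖k‖ * |b|) := by ring
  constructor
  · exact key
  · refine key.trans ?_
    have h2 := r_abs_deriv2_le hη hr0
    have h3 : α + 4 * supD η + ‖x‖ * ‖k‖ * |deriv (deriv η) (‖x‖ * ‖k‖)| ≤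
        α + 4 * supD η + 2 * supD2 η := by linarith
    exact mul_le_mul_of_nonneg_left h3 (by positivity)

end
end
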